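/- Reachability-restriction preserves input-output behavior: let L_v be a matrix whose columns form an orthonormal basis of the reachability subspace B_v ⊆ ℝ^{n_v}, and define the reduced system with edge matrices (L_vᵀ A_σ L_u, L_vᵀ B_σ, C_σ L_u, D_σ) for each edge (u,v,σ). Then for every finite path π and every input sequence w, the output sequence of the reduced system started at 0 equals the output sequence of the original system started at 0. In particular the two systems have the same L_p-gain. -/
import Mathlib


open Matrix

/-- Input-driven state of a rectangular switching system, from zero initial state. -/
def rstate {V Λ : Type*} (nd : V → ℕ) {d : ℕ} (src tgt : Λ → V)
    (A : (σ : Λ) → Matrix (Fin (nd (tgt σ))) (Fin (nd (src σ))) ℝ)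
    (B : (σ : Λ) → Matrix (Fin (nd (tgt σ))) (Fin d) ℝ)
    (σseq : ℕ → Λ) (hch : ∀ t, tgt (σseq t) = src (σseq (t + 1)))
    (w : ℕ → Fin d → ℝ) : (t : ℕ) → Fin (nd (src (σseq t))) → ℝ
  | 0 => 0
  | t + 1 => cast (congrArg (fun u => Fin (nd u) → ℝ) (hch t))
      ((A (σseq t)).mulVec (rstate nd src tgt A B σseq hch w t)
        + (B (σseq t)).mulVec (w t))

/-- The set of states reachable from `0` at node `v` along admissible paths. -/
def reachSet {V Λ : Type*} (nd : V → ℕ) {d : ℕ} (src tgt : Λ → V) (Efin : Finset Λ)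
    (A : (σ : Λ) → Matrix (Fin (nd (tgt σ))) (Fin (nd (src σ))) ℝ)
    (B : (σ : Λ) → Matrix (Fin (nd (tgt σ))) (Fin d) ℝ)
    (v : V) : Set (Fin (nd v) → ℝ) :=
  {x | ∃ (T : ℕ) (σseq : ℕ → Λ) (hch : ∀ t, tgt (σseq t) = src (σseq (t + 1)))
      (w : ℕ → Fin d → ℝ) (hT : src (σseq T) = v),
      (∀ t < T, σseq t ∈ Efin) ∧
      x = cast (congrArg (fun u => Fin (nd u) → ℝ) hT)
            (rstate nd src tgt A B σseq hch w T)}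


lemma cast_mulVec_aux {V : Type*} (nd md : V → ℕ)
    (L : (v : V) → Matrix (Fin (nd v)) (Fin (md v)) ℝ) {u u' : V} (h : u = u')
    (y : Fin (md u) → ℝ) :
    (L u').mulVec (cast (congrArg (fun v => Fin (md v) → ℝ) h) y)
      = cast (congrArg (fun v => Fin (nd v) → ℝ) h) ((L u).mulVec y) := by
  subst h; rfl

/-- restricting to the reachability subspaces (via orthonormal
bases `L_v` of `B_v`) preserves the input-output behavior from zero initial
state, and hence the L_p-gain. -/
theorem stmt12 {V Λ : Type*} (nd md : V → ℕ) {d m : ℕ} (src tgt : Λ → V)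
    (Efin : Finset Λ)
    (A : (σ : Λ) → Matrix (Fin (nd (tgt σ))) (Fin (nd (src σ))) ℝ)
    (B : (σ : Λ) → Matrix (Fin (nd (tgt σ))) (Fin d) ℝ)
    (C : (σ : Λ) → Matrix (Fin m) (Fin (nd (src σ))) ℝ)
    (D : (σ : Λ) → Matrix (Fin m) (Fin d) ℝ)
    (p : ℝ) (hp : 1 ≤ p)
    (L : (v : V) → Matrix (Fin (nd v)) (Fin (md v)) ℝ)
    (horth : ∀ v, (L v)ᵀ * L v = 1)
    (hrange : ∀ v, LinearMap.range (L v).mulVecLin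
      = Submodule.span ℝ (reachSet nd src tgt Efin A B v)) :
    (∀ (T : ℕ) (σseq : ℕ → Λ) (hch : ∀ t, tgt (σseq t) = src (σseq (t + 1)))
      (w : ℕ → Fin d → ℝ), (∀ t < T, σseq t ∈ Efin) → ∀ t < T,
      (C (σseq t)).mulVec (rstate nd src tgt A B σseq hch w t)
          + (D (σseq t)).mulVec (w t)
        = (C (σseq t) * L (src (σseq t))).mulVec
            (rstate md src tgt (fun σ => (L (tgt σ))ᵀ * A σ * L (src σ))
              (fun σ => (L (tgt σ))ᵀ * B σ) σseq hch w t)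
          + (D (σseq t)).mulVec (w t))
    ∧
    {γ : ℝ | 0 ≤ γ ∧ ∀ (T : ℕ) (σseq : ℕ → Λ)
        (hch : ∀ t, tgt (σseq t) = src (σseq (t + 1))) (w : ℕ → Fin d → ℝ),
        (∀ t < T, σseq t ∈ Efin) →
        ∑ t ∈ Finset.range T, ∑ i,
            |((C (σseq t)).mulVec (rstate nd src tgt A B σseq hch w t)
              + (D (σseq t)).mulVec (w t)) i| ^ p
          ≤ γ ^ p * ∑ t ∈ Finset.range T, ∑ i, |w t i| ^ p}
    = {γ : ℝ | 0 ≤ γ ∧ ∀ (T : ℕ) (σseq : ℕ → Λ)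
        (hch : ∀ t, tgt (σseq t) = src (σseq (t + 1))) (w : ℕ → Fin d → ℝ),
        (∀ t < T, σseq t ∈ Efin) →
        ∑ t ∈ Finset.range T, ∑ i,
            |((C (σseq t) * L (src (σseq t))).mulVec
                (rstate md src tgt (fun σ => (L (tgt σ))ᵀ * A σ * L (src σ))
                  (fun σ => (L (tgt σ))ᵀ * B σ) σseq hch w t)
              + (D (σseq t)).mulVec (w t)) i| ^ p
          ≤ γ ^ p * ∑ t ∈ Finset.range T, ∑ i, |w t i| ^ p} := by

  set A' := fun σ => (L (tgt σ))ᵀ * A σ * L (src σ) with hA'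
  set B' := fun σ => (L (tgt σ))ᵀ * B σ with hB'
  have proj : ∀ (v : V) (z : Fin (nd v) → ℝ),
      z ∈ reachSet nd src tgt Efin A B v → (L v * (L v)ᵀ).mulVec z = z := by
    intro v z hz
    have : z ∈ LinearMap.range (L v).mulVecLin := by
      rw [hrange v]; exact Submodule.subset_span hz
    obtain ⟨y0, hy0⟩ := this
    simp only [Matrix.mulVecLin_apply] at hy0
    rw [← hy0, Matrix.mulVec_mulVec, Matrix.mul_assoc, horth v, Matrix.mul_one]
  have key : ∀ (σseq : ℕ → Λ) (hch : ∀ t, tgt (σseq t) = src (σseq (t + 1)))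
      (w : ℕ → Fin d → ℝ) (t : ℕ), (∀ s < t, σseq s ∈ Efin) →
      (L (src (σseq t))).mulVec (rstate md src tgt A' B' σseq hch w t)
        = rstate nd src tgt A B σseq hch w t := by
    intro σseq hch w t
    induction t with
    | zero => intro _; simp [rstate, Matrix.mulVec_zero]
    | succ t ih =>
      intro hs
      have ih' := ih (fun s hs' => hs s (hs'.trans (Nat.lt_succ_self t)))
      show (L (src (σseq (t+1)))).mulVec
        (cast (congrArg (fun u => Fin (md u) → ℝ) (hch t))
          ((A' (σseq t)).mulVec (rstate md src tgt A' B' σseq hch w t)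
            + (B' (σseq t)).mulVec (w t))) = _
      rw [cast_mulVec_aux nd md L (hch t)]
      have hx : rstate nd src tgt A B σseq hch w (t+1)
          = cast (congrArg (fun u => Fin (nd u) → ℝ) (hch t))
            ((A (σseq t)).mulVec (rstate nd src tgt A B σseq hch w t)
              + (B (σseq t)).mulVec (w t)) := rfl
      rw [hx]
      congr 1
      have hmem : (A (σseq t)).mulVec (rstate nd src tgt A B σseq hch w t)
            + (B (σseq t)).mulVec (w t)
          ∈ reachSet nd src tgt Efin A B (tgt (σseq t)) := by
        refine ⟨t+1, σseq, hch, w, (hch t).symm, hs, ?_⟩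
        rw [hx, cast_cast, cast_eq]
      calc (L (tgt (σseq t))).mulVec
            ((A' (σseq t)).mulVec (rstate md src tgt A' B' σseq hch w t)
              + (B' (σseq t)).mulVec (w t))
          = (L (tgt (σseq t)) * (L (tgt (σseq t)))ᵀ).mulVec
            ((A (σseq t)).mulVec (rstate nd src tgt A B σseq hch w t)
              + (B (σseq t)).mulVec (w t)) := by
            simp only [hA', hB', Matrix.mulVec_add, Matrix.mulVec_mulVec, ← ih']
            simp [Matrix.mul_assoc]
        _ = _ := proj _ _ hmem
  have part1 : ∀ (T : ℕ) (σseq : ℕ → Λ) (hch : ∀ t, tgt (σseq t) = src (σseq (t + 1)))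
      (w : ℕ → Fin d → ℝ), (∀ t < T, σseq t ∈ Efin) → ∀ t < T,
      (C (σseq t)).mulVec (rstate nd src tgt A B σseq hch w t)
          + (D (σseq t)).mulVec (w t)
        = (C (σseq t) * L (src (σseq t))).mulVec
            (rstate md src tgt A' B' σseq hch w t)
          + (D (σseq t)).mulVec (w t) := by
    intro T σseq hch w hE t ht
    rw [← Matrix.mulVec_mulVec, key σseq hch w t (fun s hs => hE s (hs.trans ht))]
  refine ⟨part1, ?_⟩
  ext γ
  simp only [Set.mem_setOf_eq]
  constructor <;> rintro ⟨hγ, hall⟩ <;> refine ⟨hγ, fun T σseq hch w hE => ?_⟩ <;>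
    [skip; skip] <;>
  · have hsum : ∀ t ∈ Finset.range T,
        (∑ i, |((C (σseq t)).mulVec (rstate nd src tgt A B σseq hch w t)
              + (D (σseq t)).mulVec (w t)) i| ^ p)
        = ∑ i, |((C (σseq t) * L (src (σseq t))).mulVec
                (rstate md src tgt A' B' σseq hch w t)
              + (D (σseq t)).mulVec (w t)) i| ^ p := by
      intro t ht
      rw [part1 T σseq hch w hE t (Finset.mem_range.mp ht)]
    have h2 := Finset.sum_congr rfl hsum
    first
      | (rw [h2]; exact hall T σseq hch w hE)
      | (rw [← h2]; exact hall T σseq hch w hE)
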